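/- Let n ≥ 2, k ≥ 1 an integer, and m ≥ 1. Suppose the set G of m goods is partitioned into sets T, S_1,…,S_{k−1}, B with |T| = n−1 and |S_ℓ| ≤ m^{(2ℓ−1)/(2k−1)} for every ℓ ∈ {1,…,k−1}. Let u : G → ℝ be given by u(g) = √k for g ∈ T, u(g) = m^{−2ℓ/(2k−1)} for g ∈ S_ℓ, and u(g) = 0 for g ∈ B, and suppose every agent has the additive valuation u. Let X be an allocation such that X_n ∩ T = ∅ and such that there exist an agent i ≠ n and a good g* ∈ T ∩ X_i with |X_i| ≥ 2. Then X is not α-EFX for any α > √k · m^{−1/(2k−1)}. -/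

import Mathlib

/-!
Agent `n` holds no good of `T`, so her bundle is worth at most
`∑ ℓ, |S_ℓ| m^(-2ℓ/(2k-1)) ≤ (k-1) m^(-1/(2k-1))`. Agent `i` holds `g* ∈ T` and some other
good `g'`, and `X_i \ {g'}` is still worth at least `√k`. So `α`-EFX of agent `n` towards
agent `i` forces `α √k ≤ (k-1) m^(-1/(2k-1)) < k m^(-1/(2k-1))`, i.e. `α ≤ √k m^(-1/(2k-1))`.
-/

open Finset

namespace Finset

variable {ι α M : Type*} [AddCommMonoid M] [PartialOrder M] [IsOrderedAddMonoid M]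

theorem sum_le_sum_of_ne_zero_of_nonneg {s t : Finset ι} {f : ι → M} (hf : ∀ i, 0 ≤ f i)
    (h : ∀ i ∈ s, f i ≠ 0 → i ∈ t) : ∑ i ∈ s, f i ≤ ∑ i ∈ t, f i := by
  classical
  rw [← sum_filter_ne_zero]
  refine sum_le_sum_of_subset_of_nonneg (fun i hi ↦ ?_) (fun i _ _ ↦ hf i)
  obtain ⟨his, hi0⟩ := mem_filter.mp hi
  exact h i his hi0

theorem sum_biUnion_le_of_nonneg [DecidableEq α] {f : α → M} (hf : ∀ a, 0 ≤ f a)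
    (I : Finset ι) (S : ι → Finset α) :
    ∑ a ∈ I.biUnion S, f a ≤ ∑ i ∈ I, ∑ a ∈ S i, f a := by
  rw [← sup_eq_biUnion]
  refine I.apply_sup_le_sum (f := fun s ↦ ∑ a ∈ s, f a) sum_empty fun {s t} ↦ ?_
  rw [← sum_union_inter]
  exact le_add_of_nonneg_right (sum_nonneg fun a _ ↦ hf a)

end Finset

theorem sum_le_rpow_of_card_le {α : Type*} {s : Finset α} {u : α → ℝ} {x ℓ D : ℝ}
    (hx : 0 < x) (hcard : (s.card : ℝ) ≤ x ^ ((2 * ℓ - 1) / D))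
    (hu : ∀ g ∈ s, u g = x ^ (-(2 * ℓ) / D)) :
    ∑ g ∈ s, u g ≤ x ^ (-1 / D) := by
  rw [sum_congr rfl hu, sum_const, nsmul_eq_mul]
  calc (s.card : ℝ) * x ^ (-(2 * ℓ) / D)
      ≤ x ^ ((2 * ℓ - 1) / D) * x ^ (-(2 * ℓ) / D) := by gcongr
    _ = x ^ (-1 / D) := by rw [← Real.rpow_add hx]; ring_nf

theorem sum_le_mul_rpow_of_disjoint {α : Type*} {T B A : Finset α} {S : ℕ → Finset α}
    {u : α → ℝ} {x D : ℝ} {K : ℕ} (hx : 0 < x) (hu : ∀ g, 0 ≤ u g)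
    (hScard : ∀ ℓ : ℕ, 1 ≤ ℓ → ℓ ≤ K → ((S ℓ).card : ℝ) ≤ x ^ ((2 * (ℓ : ℝ) - 1) / D))
    (hcover : ∀ g, g ∈ T ∨ g ∈ B ∨ ∃ ℓ : ℕ, 1 ≤ ℓ ∧ ℓ ≤ K ∧ g ∈ S ℓ)
    (huS : ∀ ℓ : ℕ, 1 ≤ ℓ → ℓ ≤ K → ∀ g ∈ S ℓ, u g = x ^ (-(2 * (ℓ : ℝ)) / D))
    (huB : ∀ g ∈ B, u g = 0) (hA : Disjoint A T) :
    ∑ g ∈ A, u g ≤ K * x ^ (-1 / D) := by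
  classical
  calc ∑ g ∈ A, u g ≤ ∑ g ∈ (Icc 1 K).biUnion S, u g := by
        refine sum_le_sum_of_ne_zero_of_nonneg hu fun g hg hg0 ↦ ?_
        rcases hcover g with hgT | hgB | ⟨ℓ, h1, h2, hgS⟩
        · exact absurd hgT (disjoint_left.mp hA hg)
        · exact absurd (huB g hgB) hg0
        · exact mem_biUnion.mpr ⟨ℓ, mem_Icc.mpr ⟨h1, h2⟩, hgS⟩
    _ ≤ ∑ ℓ ∈ Icc 1 K, ∑ g ∈ S ℓ, u g := sum_biUnion_le_of_nonneg hu _ _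
    _ ≤ ∑ ℓ ∈ Icc 1 K, x ^ (-1 / D) := sum_le_sum fun ℓ hℓ ↦
        sum_le_rpow_of_card_le hx (hScard ℓ (mem_Icc.mp hℓ).1 (mem_Icc.mp hℓ).2)
          (huS ℓ (mem_Icc.mp hℓ).1 (mem_Icc.mp hℓ).2)
    _ = K * x ^ (-1 / D) := by rw [sum_const, Nat.card_Icc, nsmul_eq_mul, Nat.add_sub_cancel]

/-- In the lower-bound instance where the goods are partitioned into
`T, S_1, …, S_{k-1}, B` with `|T| = n-1`, `|S_ℓ| ≤ m^((2ℓ-1)/(2k-1))`, and every agent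
has the additive valuation `u` (value `√k` on `T`, `m^(-2ℓ/(2k-1))` on `S_ℓ`, `0` on
`B`): if in the allocation `X` agent `n` gets no good from `T`, and some other agent `i`
gets a good of `T` and at least two goods, then `X` is not `α`-EFX for any
`α > √k · m^(-1/(2k-1))`. -/
theorem stmt_5 (n k m : ℕ) (hn : 2 ≤ n) (hk : 1 ≤ k)
    (T B : Finset (Fin m)) (S : ℕ → Finset (Fin m))
    (hScard : ∀ ℓ : ℕ, 1 ≤ ℓ → ℓ ≤ k - 1 →
      ((S ℓ).card : ℝ) ≤ (m : ℝ) ^ ((2 * (ℓ : ℝ) - 1) / (2 * (k : ℝ) - 1)))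
    (hcoverG : ∀ g : Fin m, g ∈ T ∨ g ∈ B ∨ ∃ ℓ : ℕ, 1 ≤ ℓ ∧ ℓ ≤ k - 1 ∧ g ∈ S ℓ)
    (u : Fin m → ℝ)
    (huT : ∀ g ∈ T, u g = Real.sqrt k)
    (huS : ∀ ℓ : ℕ, 1 ≤ ℓ → ℓ ≤ k - 1 → ∀ g ∈ S ℓ,
      u g = (m : ℝ) ^ (-(2 * (ℓ : ℝ)) / (2 * (k : ℝ) - 1)))
    (huB : ∀ g ∈ B, u g = 0)
    (X : Fin n → Finset (Fin m))
    (hXn : X ⟨n - 1, by omega⟩ ∩ T = ∅)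
    (i : Fin n)
    (gstar : Fin m) (hgstar : gstar ∈ T ∩ X i) (hXi : 2 ≤ (X i).card) :
    ∀ α : ℝ, Real.sqrt k * (m : ℝ) ^ (-(1 : ℝ) / (2 * (k : ℝ) - 1)) < α →
      ¬ (∀ i' j : Fin n, X j ≠ ∅ → ∀ g ∈ X j,
          α * ((X j).erase g).sum u ≤ (X i').sum u) := by
  intro α hα hEFX
  set N : Fin n := ⟨n - 1, by omega⟩
  set r := (m : ℝ) ^ (-(1 : ℝ) / (2 * (k : ℝ) - 1))
  have hm : (0 : ℝ) < m := by exact_mod_cast gstar.pos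
  have hsqrt : 0 < Real.sqrt k := Real.sqrt_pos.mpr (by exact_mod_cast hk)
  have hα0 : 0 < α := (mul_pos hsqrt (Real.rpow_pos_of_pos hm _)).trans hα
  have hu : ∀ g, 0 ≤ u g := fun g ↦ by
    rcases hcoverG g with hg | hg | ⟨ℓ, h1, h2, hg⟩
    · exact (huT g hg).symm ▸ Real.sqrt_nonneg _
    · exact (huB g hg).ge
    · exact (huS ℓ h1 h2 g hg).symm ▸ by positivity
  obtain ⟨hgT, hgX⟩ := mem_inter.mp hgstar
  obtain ⟨g', hg'X, hg'⟩ := exists_mem_ne hXi gstar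
  have hlow : Real.sqrt k ≤ ∑ g ∈ (X i).erase g', u g :=
    huT gstar hgT ▸ single_le_sum (fun g _ ↦ hu g) (mem_erase.mpr ⟨hg'.symm, hgX⟩)
  refine lt_irrefl (α * Real.sqrt k) ?_
  calc α * Real.sqrt k ≤ α * ∑ g ∈ (X i).erase g', u g := by gcongr
    _ ≤ ∑ g ∈ X N, u g := hEFX N i (ne_empty_of_mem hgX) g' hg'X
    _ ≤ (k - 1 : ℕ) * r :=
      sum_le_mul_rpow_of_disjoint hm hu hScard hcoverG huS huB (disjoint_iff_inter_eq_empty.mpr hXn)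
    _ ≤ k * r := by gcongr; exact_mod_cast Nat.sub_le k 1
    _ = Real.sqrt k * (Real.sqrt k * r) := by rw [← mul_assoc, Real.mul_self_sqrt k.cast_nonneg]
    _ < Real.sqrt k * α := by gcongr
    _ = α * Real.sqrt k := mul_comm _ _
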